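/- arXiv:1606.00680 — 2 statements merged into one kernel-verified Lean document; each statement's English description precedes it below -/
import Mathlib

section
/- First derivative test for exponential integrals: if F : [a,b] → ℝ is differentiable with F' monotonic and either F'(x) ≥ m > 0 for all x in [a,b], or F'(x) ≤ -m < 0 for all x in [a,b], then |∫_a^b e^{iF(x)} dx| ≤ 4/m. -/
/-!
Write `e^{iF} = φ · (e^{iF} F')` with `φ = 1 / F'`. The second factor has the primitive
`-i e^{iF}`, so its integral over any subinterval has norm at most `2`, while `φ` is monotone
with values in `[0, 1/m]`. The layer-cake formula `φ x = ∫₀^{1/m} 1_{t < φ x} dt` and Fubini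
turn `∫ φ · (e^{iF} F')` into an integral over `t ∈ (0, 1/m)` of integrals of `e^{iF} F'` over
the superlevel sets `{φ > t}`, which are intervals; hence the bound `2/m`. The case
`F' ≤ -m` reduces to this one by complex conjugation.
-/

open Set MeasureTheory

theorem Set.OrdConnected.ae_eq_Ioo_csInf_csSup {s : Set ℝ} (hs : s.OrdConnected)
    (hne : s.Nonempty) (hb : BddBelow s) (ha : BddAbove s) :
    s =ᵐ[volume] Ioo (sInf s) (sSup s) :=
  ((subset_Icc_csInf_csSup hb ha).eventuallyLE.trans Ioo_ae_eq_Icc.symm.le).antisymm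
    (IsConnected.Ioo_csInf_csSup_subset ⟨hne, isPreconnected_iff_ordConnected.2 hs⟩ hb
      ha).eventuallyLE

section
variable {E : Type*} [NormedAddCommGroup E] [NormedSpace ℝ E]

theorem norm_setIntegral_le_of_ordConnected {h : ℝ → E} {a b M : ℝ} (hab : a ≤ b)
    (hM : ∀ p q, a ≤ p → p ≤ q → q ≤ b → ‖∫ x in p..q, h x‖ ≤ M)
    {s : Set ℝ} (hs : s.OrdConnected) (hsub : s ⊆ Icc a b) :
    ‖∫ x in s, h x‖ ≤ M := by
  rcases s.eq_empty_or_nonempty with rfl | hne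
  · simpa using hM a a le_rfl le_rfl hab
  have hb : BddBelow s := bddBelow_Icc.mono hsub
  have ha : BddAbove s := bddAbove_Icc.mono hsub
  obtain ⟨x, hx⟩ := hne
  have hpq : sInf s ≤ sSup s := (csInf_le hb hx).trans (le_csSup ha hx)
  rw [setIntegral_congr_set (hs.ae_eq_Ioo_csInf_csSup ⟨x, hx⟩ hb ha),
    ← integral_Ioc_eq_integral_Ioo, ← intervalIntegral.integral_of_le hpq]
  exact hM _ _ (le_csInf ⟨x, hx⟩ fun y hy => (hsub hy).1) hpq
    (csSup_le ⟨x, hx⟩ fun y hy => (hsub hy).2)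

theorem setIntegral_Ioo_indicator_Iio_const [CompleteSpace E] {x K : ℝ} (v : E) (hx₀ : 0 ≤ x)
    (hxK : x ≤ K) :
    ∫ t in Ioo 0 K, (Iio x).indicator (fun _ => v) t = x • v := by
  rw [setIntegral_indicator measurableSet_Iio, Ioo_inter_Iio, min_eq_right hxK,
    setIntegral_const, Real.volume_real_Ioo_of_le hx₀, sub_zero]

theorem norm_intervalIntegral_smul_le_of_monotone_or_antitone [CompleteSpace E] {a b K M : ℝ}
    {φ : ℝ → ℝ} {h : ℝ → E} (hab : a ≤ b) (hφ : Monotone φ ∨ Antitone φ)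
    (hφ₀ : ∀ x ∈ Icc a b, 0 ≤ φ x) (hφK : ∀ x ∈ Icc a b, φ x ≤ K)
    (hh : IntegrableOn h (Icc a b))
    (hM : ∀ p q, a ≤ p → p ≤ q → q ≤ b → ‖∫ x in p..q, h x‖ ≤ M) :
    ‖∫ x in a..b, φ x • h x‖ ≤ K * M := by
  have hφm : Measurable φ := by rcases hφ with hφ | hφ; exacts [hφ.measurable, hφ.measurable]
  set A : Set (ℝ × ℝ) := {p | p.2 < φ p.1}
  have hA : MeasurableSet A := measurableSet_lt measurable_snd (hφm.comp measurable_fst)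
  have hK : 0 ≤ K := (hφ₀ a ⟨le_rfl, hab⟩).trans (hφK a ⟨le_rfl, hab⟩)
  have hint : Integrable (A.indicator fun p => h p.1)
      ((volume.restrict (Ioc a b)).prod (volume.restrict (Ioo 0 K))) :=
    ((hh.mono_set Ioc_subset_Icc_self).comp_fst _).indicator hA
  have hlayer :
      ∀ x ∈ Ioc a b, φ x • h x = ∫ t in Ioo 0 K, A.indicator (fun p => h p.1) (x, t) :=
    fun x hx => (setIntegral_Ioo_indicator_Iio_const (h x) (hφ₀ x (Ioc_subset_Icc_self hx))
      (hφK x (Ioc_subset_Icc_self hx))).symm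
  have hslice : ∀ t, ‖∫ x in Ioc a b, A.indicator (fun p => h p.1) (x, t)‖ ≤ M := fun t => by
    have hlevel : {x | t < φ x}.OrdConnected := by
      rcases hφ with hφ | hφ
      · exact ⟨fun x hx _ _ _ hz => lt_of_lt_of_le hx (hφ hz.1)⟩
      · exact ⟨fun _ _ y hy _ hz => lt_of_lt_of_le hy (hφ hz.2)⟩
    rw [show (fun x => A.indicator (fun p => h p.1) (x, t)) = {x | t < φ x}.indicator h from rfl,
      setIntegral_indicator (measurableSet_lt measurable_const hφm)]
    exact norm_setIntegral_le_of_ordConnected hab hM (ordConnected_Ioc.inter hlevel)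
      (inter_subset_left.trans Ioc_subset_Icc_self)
  calc ‖∫ x in a..b, φ x • h x‖
      = ‖∫ x in Ioc a b, ∫ t in Ioo 0 K, A.indicator (fun p => h p.1) (x, t)‖ := by
        rw [intervalIntegral.integral_of_le hab, setIntegral_congr_fun measurableSet_Ioc hlayer]
    _ = ‖∫ t in Ioo 0 K, ∫ x in Ioc a b, A.indicator (fun p => h p.1) (x, t)‖ := by
        rw [integral_integral_swap (f := fun x t => A.indicator (fun p => h p.1) (x, t)) hint]
    _ ≤ M * volume.real (Ioo 0 K) :=
        norm_setIntegral_le_of_norm_le_const measure_Ioo_lt_top fun t _ => hslice t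
    _ = K * M := by rw [Real.volume_real_Ioo_of_le hK, sub_zero, mul_comm]

end

open Complex in
theorem norm_intervalIntegral_exp_I_mul_mul_deriv_le_two {F F' : ℝ → ℝ} {p q : ℝ}
    (hF : ∀ x ∈ uIcc p q, HasDerivAt F (F' x) x)
    (hint : IntervalIntegrable (fun x => cexp (I * F x) * F' x) volume p q) :
    ‖∫ x in p..q, cexp (I * F x) * F' x‖ ≤ 2 := by
  have hprim : ∀ x ∈ uIcc p q,
      HasDerivAt (fun y => -I * cexp (I * F y)) (cexp (I * F x) * F' x) x := fun x hx => by
    refine ((((hF x hx).ofReal_comp.const_mul I).cexp).const_mul (-I)).congr_deriv ?_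
    linear_combination -cexp (I * F x) * F' x * I_mul_I
  rw [intervalIntegral.integral_eq_sub_of_hasDerivAt hprim hint]
  calc _ ≤ ‖-I * cexp (I * F q)‖ + ‖-I * cexp (I * F p)‖ := norm_sub_le _ _
    _ = 2 := by simp only [norm_mul, norm_neg, norm_I, norm_exp_I_mul_ofReal]; norm_num

open Complex ComplexConjugate in
theorem norm_intervalIntegral_exp_I_mul_neg (F : ℝ → ℝ) (a b : ℝ) :
    ‖∫ x in a..b, cexp (I * ↑(-F x))‖ = ‖∫ x in a..b, cexp (I * F x)‖ := by
  have hconj : ∀ x, cexp (I * ↑(-F x)) = conj (cexp (I * F x)) := fun x => by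
    rw [← exp_conj, map_mul, conj_I, conj_ofReal, ofReal_neg, neg_mul, mul_neg]
  simp only [hconj, intervalIntegral.intervalIntegral_conj, RCLike.norm_conj]

open Complex in
theorem norm_intervalIntegral_exp_I_mul_le_of_le_deriv {a b m : ℝ} (hab : a ≤ b) (hm : 0 < m)
    {F F' : ℝ → ℝ} (hderiv : ∀ x ∈ Icc a b, HasDerivAt F (F' x) x)
    (hmono : MonotoneOn F' (Icc a b) ∨ AntitoneOn F' (Icc a b))
    (hb : ∀ x ∈ Icc a b, m ≤ F' x) :
    ‖∫ x in a..b, cexp (I * F x)‖ ≤ 2 / m := by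
  -- composing with `projIcc` makes `φ` monotone on all of `ℝ`, hence measurable
  set φ : ℝ → ℝ := fun x => (F' (projIcc a b hab x))⁻¹
  have hpos : ∀ x, 0 < F' (projIcc a b hab x) := fun x => hm.trans_le (hb _ (projIcc a b hab x).2)
  have hφ : Monotone φ ∨ Antitone φ := by
    have hP := monotone_projIcc hab
    rcases hmono with h | h
    · exact Or.inr fun x y hxy => inv_anti₀ (hpos x) (h (Subtype.prop _) (Subtype.prop _) (hP hxy))
    · exact Or.inl fun x y hxy => inv_anti₀ (hpos y) (h (Subtype.prop _) (Subtype.prop _) (hP hxy))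
  have hφ_eq : ∀ x ∈ Icc a b, φ x = (F' x)⁻¹ := fun x hx => by simp [φ, projIcc_of_mem hab hx]
  have hh : IntegrableOn (fun x => cexp (I * F x) * F' x) (Icc a b) := by
    have hF : ContinuousOn F (Icc a b) := fun x hx =>
      (hderiv x hx).continuousAt.continuousWithinAt
    refine IntegrableOn.continuousOn_mul (by fun_prop) ?_ isCompact_Icc
    rcases hmono with h | h
    exacts [(h.integrableOn_isCompact isCompact_Icc).ofReal,
      (h.integrableOn_isCompact isCompact_Icc).ofReal]
  calc ‖∫ x in a..b, cexp (I * F x)‖ = ‖∫ x in a..b, φ x • (cexp (I * F x) * F' x)‖ := by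
        congr 1
        refine intervalIntegral.integral_congr fun x hx => ?_
        rw [uIcc_of_le hab] at hx
        have : (F' x : ℂ) ≠ 0 := ofReal_ne_zero.2 (hm.trans_le (hb x hx)).ne'
        rw [hφ_eq x hx, real_smul, ofReal_inv]
        field_simp
    _ ≤ m⁻¹ * 2 := by
        refine norm_intervalIntegral_smul_le_of_monotone_or_antitone hab hφ
          (fun x _ => (inv_pos.2 (hpos x)).le) (fun x hx => hφ_eq x hx ▸ inv_anti₀ hm (hb x hx)) hh
          fun p q hap hpq hqb => ?_
        refine norm_intervalIntegral_exp_I_mul_mul_deriv_le_two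
          (fun x hx => hderiv x ?_) ((intervalIntegrable_iff_integrableOn_Icc_of_le hpq).2
            (hh.mono_set (Icc_subset_Icc hap hqb)))
        rw [uIcc_of_le hpq] at hx
        exact ⟨hap.trans hx.1, hx.2.trans hqb⟩
    _ = 2 / m := inv_mul_eq_div m 2

theorem first_derivative_test_exponential_integral
    (a b m : ℝ) (hab : a ≤ b) (hm : 0 < m) (F F' : ℝ → ℝ)
    (hderiv : ∀ x ∈ Icc a b, HasDerivAt F (F' x) x)
    (hmono : MonotoneOn F' (Icc a b) ∨ AntitoneOn F' (Icc a b))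
    (hbound : (∀ x ∈ Icc a b, m ≤ F' x) ∨ (∀ x ∈ Icc a b, F' x ≤ -m)) :
    ‖∫ x in a..b, Complex.exp (Complex.I * (F x : ℂ))‖ ≤ 4 / m := by
  suffices h : ‖∫ x in a..b, Complex.exp (Complex.I * (F x : ℂ))‖ ≤ 2 / m from
    h.trans (by gcongr; norm_num)
  rcases hbound with hb | hb
  · exact norm_intervalIntegral_exp_I_mul_le_of_le_deriv hab hm hderiv hmono hb
  · rw [← norm_intervalIntegral_exp_I_mul_neg]
    exact norm_intervalIntegral_exp_I_mul_le_of_le_deriv hab hm (F' := fun x => -F' x)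
      (fun x hx => (hderiv x hx).neg) (hmono.symm.imp AntitoneOn.neg MonotoneOn.neg)
      fun x hx => le_neg.2 (hb x hx)
end

section
/- Second derivative test for exponential integrals: if F : [a,b] → ℝ is twice differentiable with F''(x) ≥ r > 0 (or F''(x) ≤ -r < 0) on [a,b], and G : [a,b] → ℝ satisfies |G(x)| ≤ M with G/F' monotonic, then |∫_a^b G(x) e^{iF(x)} dx| ≤ 8M/√r. -/
/-!
If `h` is monotone with `|h| ≤ K` and `w' = dw/dx` with `‖w‖ ≤ B`, integrating by parts against
the Stieltjes measure `dh` gives `‖∫ h w'‖ ≤ 4 K B`. With `w = -i e^{iF}` and `h = G / F'` this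
bounds `∫ G e^{iF}` by `4M/η` on any interval where `|F'| ≥ η`. Since `|F''| ≥ r`, there is a
point `x₀` with `|F' x| ≥ r |x - x₀|`. Outside `(x₀ - δ, x₀ + δ)` each side contributes at most
`4M/(rδ)`, inside the trivial bound gives `2δM`, and `δ = 2/√r` balances these to `8M/√r`.
-/

open Set MeasureTheory

theorem Monotone.ae_eq_stieltjesFunction {g : ℝ → ℝ} (hg : Monotone g) :
    hg.stieltjesFunction =ᵐ[volume] g := by
  filter_upwards [hg.countable_not_continuousAt.ae_notMem volume] with x hx
  exact (not_not.1 hx).continuousWithinAt.rightLim_eq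

theorem StieltjesFunction.measureReal_Ioc (s : StieltjesFunction ℝ) {c d : ℝ} (hcd : c ≤ d) :
    s.measure.real (Ioc c d) = s d - s c := by
  rw [measureReal_def, s.measure_Ioc, ENNReal.toReal_ofReal (sub_nonneg.2 (s.mono hcd))]

section

variable {E : Type*} [NormedAddCommGroup E] [NormedSpace ℝ E] [CompleteSpace E]

theorem StieltjesFunction.setIntegral_sub_smul_eq (s : StieltjesFunction ℝ) {c d : ℝ}
    {g : ℝ → E} (hg : IntegrableOn g (Ioc c d)) :
    ∫ x in Ioc c d, (s x - s c) • g x = ∫ t in Ioc c d, (∫ x in t..d, g x) ∂s.measure := by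
  have : IsFiniteMeasure (s.measure.restrict (Ioc c d)) :=
    isFiniteMeasure_restrict.2 (by simp [s.measure_Ioc])
  have hIic : ∀ x ∈ Ioc c d, (s.measure.restrict (Ioc c d)).real (Iic x) = s x - s c :=
    fun x hx => by
      rw [measureReal_restrict_apply measurableSet_Iic, Iic_inter_Ioc_of_le hx.2,
        s.measureReal_Ioc hx.1.le]
  let f : ℝ → ℝ → E := fun x t => if t ≤ x then g x else 0
  have hf : Integrable (Function.uncurry f)
      ((volume.restrict (Ioc c d)).prod (s.measure.restrict (Ioc c d))) := by
    have : Function.uncurry f = {p : ℝ × ℝ | p.2 ≤ p.1}.indicator (fun p => g p.1) := by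
      ext p; simp [f, indicator_apply, Function.uncurry]
    rw [this]
    exact (hg.comp_fst _).indicator (measurableSet_le measurable_snd measurable_fst)
  calc ∫ x in Ioc c d, (s x - s c) • g x
      = ∫ x in Ioc c d, ∫ t in Ioc c d, f x t ∂s.measure := by
        refine setIntegral_congr_fun measurableSet_Ioc fun x hx => ?_
        rw [← hIic x hx, ← integral_indicator_const _ measurableSet_Iic]
        congr 1 with t
    _ = ∫ t in Ioc c d, (∫ x in Ioc c d, f x t) ∂s.measure := integral_integral_swap hf
    _ = ∫ t in Ioc c d, (∫ x in t..d, g x) ∂s.measure := by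
        refine setIntegral_congr_fun measurableSet_Ioc fun t ht => ?_
        have hIcc : Ici t ∩ Ioc c d = Icc t d := by
          ext x
          simp only [mem_inter_iff, mem_Ici, mem_Ioc, mem_Icc]
          exact ⟨fun h => ⟨h.1, h.2.2⟩, fun h => ⟨h.1, ht.1.trans_le h.1, h.2⟩⟩
        rw [intervalIntegral.integral_of_le ht.2,
          ← (integral_Icc_eq_integral_Ioc : ∫ x in Icc t d, g x = _), ← hIcc,
          ← Measure.restrict_restrict measurableSet_Ici, ← integral_indicator measurableSet_Ici]
        congr 1 with x

theorem StieltjesFunction.integral_smul_deriv_eq (s : StieltjesFunction ℝ) {c d : ℝ}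
    (hcd : c ≤ d) {w w' : ℝ → E} (hw : ∀ x ∈ Icc c d, HasDerivAt w (w' x) x)
    (hw' : ContinuousOn w' (Icc c d)) :
    ∫ x in c..d, s x • w' x = s d • w d - s c • w c - ∫ t in Ioc c d, w t ∂s.measure := by
  have ftc : ∀ t ∈ Icc c d, ∫ x in t..d, w' x = w d - w t := fun t ht =>
    intervalIntegral.integral_eq_sub_of_hasDerivAt
      (fun x hx => hw x (Icc_subset_Icc_left ht.1 (uIcc_of_le ht.2 ▸ hx)))
      ((hw'.mono (Icc_subset_Icc_left ht.1)).intervalIntegrable_of_Icc ht.2)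
  have hw'i : IntegrableOn w' (Ioc c d) := (hw'.integrableOn_Icc).mono_set Ioc_subset_Icc_self
  have hwi : IntegrableOn w (Ioc c d) s.measure :=
    (HasDerivAt.continuousOn hw).integrableOn_Icc.mono_set Ioc_subset_Icc_self
  have hsi : IntegrableOn (fun x => (s x - s c) • w' x) (Ioc c d) :=
    hw'i.bdd_smul (s d - s c) (s.mono.measurable.sub_const _).aestronglyMeasurable <|
      (ae_restrict_mem measurableSet_Ioc).mono fun x hx => by
        rw [Real.norm_of_nonneg (sub_nonneg.2 (s.mono hx.1.le))]
        exact sub_le_sub_right (s.mono hx.2) _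
  have hftc : ∫ t in Ioc c d, (∫ x in t..d, w' x) ∂s.measure
      = ∫ t in Ioc c d, (w d - w t) ∂s.measure :=
    setIntegral_congr_fun measurableSet_Ioc fun t ht => ftc t (Ioc_subset_Icc_self ht)
  have : IsFiniteMeasure (s.measure.restrict (Ioc c d)) :=
    isFiniteMeasure_restrict.2 (by simp [s.measure_Ioc])
  calc ∫ x in c..d, s x • w' x
      = ∫ x in Ioc c d, s c • w' x + (s x - s c) • w' x := by
        rw [intervalIntegral.integral_of_le hcd]
        congr 1 with x
        rw [← add_smul, add_sub_cancel]
    _ = s c • (w d - w c) + ((s d - s c) • w d - ∫ t in Ioc c d, w t ∂s.measure) := by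
        rw [integral_add (f := fun x => s c • w' x) (hw'i.smul (s c)) hsi, integral_smul,
          s.setIntegral_sub_smul_eq hw'i, hftc, integral_sub (integrable_const _) hwi,
          setIntegral_const, s.measureReal_Ioc hcd, ← ftc c ⟨le_rfl, hcd⟩, intervalIntegral.integral_of_le hcd]
    _ = s d • w d - s c • w c - ∫ t in Ioc c d, w t ∂s.measure := by module

theorem StieltjesFunction.norm_integral_smul_deriv_le (s : StieltjesFunction ℝ) {c d K B : ℝ}
    (hcd : c ≤ d) (hc : |s c| ≤ K) (hd : |s d| ≤ K) {w w' : ℝ → E}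
    (hw : ∀ x ∈ Icc c d, HasDerivAt w (w' x) x) (hw' : ContinuousOn w' (Icc c d))
    (hB : ∀ x ∈ Icc c d, ‖w x‖ ≤ B) :
    ‖∫ x in c..d, s x • w' x‖ ≤ 4 * K * B := by
  have hK₀ : 0 ≤ K := (abs_nonneg _).trans hc
  have hB₀ : 0 ≤ B := (norm_nonneg _).trans (hB c ⟨le_rfl, hcd⟩)
  have hint : ‖∫ t in Ioc c d, w t ∂s.measure‖ ≤ B * (s d - s c) := by
    rw [← s.measureReal_Ioc hcd]
    exact norm_setIntegral_le_of_norm_le_const (by simp [s.measure_Ioc])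
      fun t ht => hB t (Ioc_subset_Icc_self ht)
  rw [s.integral_smul_deriv_eq hcd hw hw']
  calc ‖s d • w d - s c • w c - ∫ t in Ioc c d, w t ∂s.measure‖
      ≤ |s d| * ‖w d‖ + |s c| * ‖w c‖ + B * (s d - s c) := by
        refine (norm_sub_le _ _).trans (add_le_add ((norm_sub_le _ _).trans_eq ?_) hint)
        rw [norm_smul, norm_smul, Real.norm_eq_abs, Real.norm_eq_abs]
    _ ≤ K * B + K * B + B * (K + K) := by
        gcongr
        exacts [hB d ⟨hcd, le_rfl⟩, hB c ⟨le_rfl, hcd⟩, by linarith [abs_le.1 hc, abs_le.1 hd]]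
    _ = 4 * K * B := by ring

theorem norm_integral_smul_deriv_le_of_monotoneOn {c d K B : ℝ} (hcd : c ≤ d) {h : ℝ → ℝ}
    (hh : MonotoneOn h (Icc c d)) (hK : ∀ x ∈ Icc c d, |h x| ≤ K)
    {w w' : ℝ → E} (hw : ∀ x ∈ Icc c d, HasDerivAt w (w' x) x)
    (hw' : ContinuousOn w' (Icc c d)) (hB : ∀ x ∈ Icc c d, ‖w x‖ ≤ B) :
    ‖∫ x in c..d, h x • w' x‖ ≤ 4 * K * B := by
  set g := IccExtend hcd ((Icc c d).domRestrict h)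
  have hgh : ∀ x ∈ Icc c d, g x = h x := fun x hx => IccExtend_of_mem hcd _ hx
  have hg : Monotone g := (monotoneOn_iff_monotone.1 hh).IccExtend hcd
  have hgK : ∀ x, |g x| ≤ K := fun x => hK _ (projIcc c d hcd x).2
  set s := hg.stieltjesFunction
  have hsK : ∀ x, |s x| ≤ K := fun x => abs_le.2
    ⟨(abs_le.1 (hgK x)).1.trans (hg.le_rightLim le_rfl),
      (hg.rightLim_le (lt_add_one x)).trans (abs_le.1 (hgK (x + 1))).2⟩
  have hhs : ∫ x in c..d, h x • w' x = ∫ x in c..d, s x • w' x := by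
    refine intervalIntegral.integral_congr_ae ?_
    filter_upwards [hg.ae_eq_stieltjesFunction] with x hx hxI
    rw [uIoc_of_le hcd] at hxI
    rw [hx, hgh x (Ioc_subset_Icc_self hxI)]
  rw [hhs]
  exact s.norm_integral_smul_deriv_le hcd (hsK c) (hsK d) hw hw' hB

theorem norm_integral_smul_deriv_le_of_antitoneOn {c d K B : ℝ} (hcd : c ≤ d) {h : ℝ → ℝ}
    (hh : AntitoneOn h (Icc c d)) (hK : ∀ x ∈ Icc c d, |h x| ≤ K)
    {w w' : ℝ → E} (hw : ∀ x ∈ Icc c d, HasDerivAt w (w' x) x)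
    (hw' : ContinuousOn w' (Icc c d)) (hB : ∀ x ∈ Icc c d, ‖w x‖ ≤ B) :
    ‖∫ x in c..d, h x • w' x‖ ≤ 4 * K * B := by
  have := norm_integral_smul_deriv_le_of_monotoneOn hcd hh.neg
    (fun x hx => (abs_neg (h x)).trans_le (hK x hx)) hw hw' hB
  simpa only [Pi.neg_apply, neg_smul, intervalIntegral.integral_neg, norm_neg] using this

end

theorem exists_mul_abs_sub_le_abs_of_le_deriv {a b r : ℝ} (hab : a ≤ b) {f f' : ℝ → ℝ}
    (hf : ∀ x ∈ Icc a b, HasDerivAt f (f' x) x) (hf' : ∀ x ∈ Icc a b, r ≤ f' x) :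
    ∃ x₀ ∈ Icc a b, ∀ x ∈ Icc a b, r * |x - x₀| ≤ |f x| := by
  have hcont : ContinuousOn f (Icc a b) := HasDerivAt.continuousOn hf
  have grow : ∀ x ∈ Icc a b, ∀ y ∈ Icc a b, x ≤ y → r * (y - x) ≤ f y - f x := by
    refine (convex_Icc a b).mul_sub_le_image_sub_of_le_deriv hcont
      (fun x hx => (hf x (interior_subset hx)).differentiableAt.differentiableWithinAt)
      fun x hx => ?_
    rw [(hf x (interior_subset hx)).deriv]
    exact hf' x (interior_subset hx)
  have right : ∀ x₀ ∈ Icc a b, 0 ≤ f x₀ → ∀ x ∈ Icc a b, x₀ ≤ x → r * |x - x₀| ≤ |f x| :=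
    fun x₀ hx₀ h0 x hx hle => by
      rw [abs_of_nonneg (sub_nonneg.2 hle)]
      linarith [grow x₀ hx₀ x hx hle, le_abs_self (f x)]
  have left : ∀ x₀ ∈ Icc a b, f x₀ ≤ 0 → ∀ x ∈ Icc a b, x ≤ x₀ → r * |x - x₀| ≤ |f x| :=
    fun x₀ hx₀ h0 x hx hle => by
      rw [abs_sub_comm, abs_of_nonneg (sub_nonneg.2 hle)]
      linarith [grow x hx x₀ hx₀ hle, neg_abs_le (f x)]
  have ha : a ∈ Icc a b := ⟨le_rfl, hab⟩
  have hb : b ∈ Icc a b := ⟨hab, le_rfl⟩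
  by_cases hfa : 0 ≤ f a
  · exact ⟨a, ha, fun x hx => right a ha hfa x hx hx.1⟩
  by_cases hfb : f b ≤ 0
  · exact ⟨b, hb, fun x hx => left b hb hfb x hx hx.2⟩
  obtain ⟨x₀, hx₀, hfx₀⟩ := intermediate_value_Icc hab hcont
    ⟨(not_le.1 hfa).le, (not_le.1 hfb).le⟩
  refine ⟨x₀, hx₀, fun x hx => (le_total x₀ x).elim (right x₀ hx₀ hfx₀.ge x hx) ?_⟩
  exact left x₀ hx₀ hfx₀.le x hx

theorem norm_integral_mul_exp_le_of_le_abs_deriv {c d η M : ℝ} (hcd : c ≤ d) (hη : 0 < η)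
    {F F' G : ℝ → ℝ} (hF : ∀ x ∈ Icc c d, HasDerivAt F (F' x) x)
    (hF' : ContinuousOn F' (Icc c d)) (hηF' : ∀ x ∈ Icc c d, η ≤ |F' x|)
    (hG : ∀ x ∈ Icc c d, |G x| ≤ M)
    (hGF' : MonotoneOn (fun x => G x / F' x) (Icc c d) ∨
      AntitoneOn (fun x => G x / F' x) (Icc c d)) :
    ‖∫ x in c..d, (G x : ℂ) * Complex.exp (Complex.I * F x)‖ ≤ 4 * M / η := by
  set w : ℝ → ℂ := fun x => -Complex.I * Complex.exp (Complex.I * F x)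
  set w' : ℝ → ℂ := fun x => F' x * Complex.exp (Complex.I * F x)
  have hw : ∀ x ∈ Icc c d, HasDerivAt w (w' x) x := fun x hx => by
    refine ((((hF x hx).ofReal_comp.const_mul Complex.I).cexp).const_mul
      (-Complex.I)).congr_deriv ?_
    linear_combination -(F' x * Complex.exp (Complex.I * F x)) * Complex.I_sq
  have hw' : ContinuousOn w' (Icc c d) :=
    (Complex.continuous_ofReal.comp_continuousOn hF').mul
      (continuousOn_const.mul
        (Complex.continuous_ofReal.comp_continuousOn (HasDerivAt.continuousOn hF))).cexp
  have hw1 : ∀ x ∈ Icc c d, ‖w x‖ ≤ 1 := fun x _ => by simp [w, Complex.norm_exp]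
  have hK : ∀ x ∈ Icc c d, |G x / F' x| ≤ M / η := fun x hx => by
    rw [abs_div]
    exact div_le_div₀ ((abs_nonneg _).trans (hG x hx)) (hG x hx) hη (hηF' x hx)
  have hint : ∫ x in c..d, (G x : ℂ) * Complex.exp (Complex.I * F x)
      = ∫ x in c..d, (G x / F' x) • w' x := by
    refine intervalIntegral.integral_congr fun x hx => ?_
    have hF'x : (F' x : ℂ) ≠ 0 := Complex.ofReal_ne_zero.2 <| abs_pos.1 <|
      hη.trans_le (hηF' x (uIcc_of_le hcd ▸ hx))
    simp only [w', Complex.real_smul, Complex.ofReal_div]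
    field_simp
  rw [hint, show 4 * M / η = 4 * (M / η) * 1 by ring]
  rcases hGF' with hmono | hanti
  · exact norm_integral_smul_deriv_le_of_monotoneOn hcd hmono hK hw hw' hw1
  · exact norm_integral_smul_deriv_le_of_antitoneOn hcd hanti hK hw hw' hw1

theorem norm_integral_mul_exp_le_of_mul_abs_sub_le_abs_deriv {a b r M δ x₀ : ℝ} (hab : a ≤ b)
    (hr : 0 < r) (hδ : 0 < δ) (hx₀ : x₀ ∈ Icc a b) {F F' G : ℝ → ℝ}
    (hF : ∀ x ∈ Icc a b, HasDerivAt F (F' x) x) (hF' : ContinuousOn F' (Icc a b))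
    (hrF' : ∀ x ∈ Icc a b, r * |x - x₀| ≤ |F' x|) (hG : ∀ x ∈ Icc a b, |G x| ≤ M)
    (hGF' : MonotoneOn (fun x => G x / F' x) (Icc a b) ∨
      AntitoneOn (fun x => G x / F' x) (Icc a b)) :
    ‖∫ x in a..b, (G x : ℂ) * Complex.exp (Complex.I * F x)‖ ≤
      4 * M / (r * δ) + 2 * δ * M + 4 * M / (r * δ) := by
  have hM : 0 ≤ M := (abs_nonneg _).trans (hG a ⟨le_rfl, hab⟩)
  have hbound : 0 ≤ 4 * M / (r * δ) := by positivity
  set f := fun x : ℝ => (G x : ℂ) * Complex.exp (Complex.I * F x)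
  have far : ∀ c d, a ≤ c → c ≤ d → d ≤ b → (∀ x ∈ Icc c d, δ ≤ |x - x₀|) →
      ‖∫ x in c..d, f x‖ ≤ 4 * M / (r * δ) := fun c d hac hcd hdb hδx => by
    have hsub : Icc c d ⊆ Icc a b := Icc_subset_Icc hac hdb
    refine norm_integral_mul_exp_le_of_le_abs_deriv hcd (by positivity)
      (fun x hx => hF x (hsub hx)) (hF'.mono hsub) (fun x hx => ?_) (fun x hx => hG x (hsub hx))
      (hGF'.imp (·.mono hsub) (·.mono hsub))
    exact (mul_le_mul_of_nonneg_left (hδx x hx) hr.le).trans (hrF' x (hsub hx))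
  set p := max a (x₀ - δ)
  set q := min b (x₀ + δ)
  have hap : a ≤ p := le_max_left _ _
  have hpq : p ≤ q :=
    max_le (le_min hab (by linarith [hx₀.1])) (le_min (by linarith [hx₀.2]) (by linarith))
  have hqb : q ≤ b := min_le_left _ _
  have hleft : ‖∫ x in a..p, f x‖ ≤ 4 * M / (r * δ) := by
    rcases max_choice a (x₀ - δ) with h | h
    · rw [show p = a from h, intervalIntegral.integral_same, norm_zero]
      exact hbound
    · refine far a p le_rfl hap (hpq.trans hqb) fun x hx => ?_
      rw [abs_sub_comm, abs_of_nonneg] <;> linarith [hx.2]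
  have hright : ‖∫ x in q..b, f x‖ ≤ 4 * M / (r * δ) := by
    rcases min_choice b (x₀ + δ) with h | h
    · rw [show q = b from h, intervalIntegral.integral_same, norm_zero]
      exact hbound
    · refine far q b (hap.trans hpq) hqb le_rfl fun x hx => ?_
      rw [abs_of_nonneg] <;> linarith [hx.1]
  have hmid : ‖∫ x in p..q, f x‖ ≤ 2 * δ * M := by
    have hfM : ∀ x ∈ uIoc p q, ‖f x‖ ≤ M := fun x hx => by
      rw [uIoc_of_le hpq] at hx
      simpa [f, Complex.norm_exp] using hG x ⟨hap.trans hx.1.le, hx.2.trans hqb⟩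
    calc ‖∫ x in p..q, f x‖ ≤ M * |q - p| := intervalIntegral.norm_integral_le_of_norm_le_const hfM
      _ ≤ 2 * δ * M := by
        rw [abs_of_nonneg (sub_nonneg.2 hpq)]
        nlinarith [le_max_right a (x₀ - δ), min_le_right b (x₀ + δ)]
  -- Integrability is only needed to split the integral; without it the integral is `0`.
  by_cases hfi : IntervalIntegrable f volume a b
  · have hfi' : ∀ c ∈ Icc a b, ∀ d ∈ Icc a b, IntervalIntegrable f volume c d :=
      fun c hc d hd => hfi.mono_set (uIcc_of_le hab ▸ uIcc_subset_Icc hc hd)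
    have hp : p ∈ Icc a b := ⟨hap, hpq.trans hqb⟩
    have hq : q ∈ Icc a b := ⟨hap.trans hpq, hqb⟩
    have ha : a ∈ Icc a b := ⟨le_rfl, hab⟩
    have hb : b ∈ Icc a b := ⟨hab, le_rfl⟩
    rw [← intervalIntegral.integral_add_adjacent_intervals (hfi' a ha p hp) (hfi' p hp b hb),
      ← intervalIntegral.integral_add_adjacent_intervals (hfi' p hp q hq) (hfi' q hq b hb),
      ← add_assoc]
    exact norm_add₃_le.trans (add_le_add_three hleft hmid hright)
  · rw [intervalIntegral.integral_undef hfi, norm_zero]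
    positivity

theorem second_derivative_test_exponential_integral
    (a b r M : ℝ) (hab : a ≤ b) (hr : 0 < r) (F F' F'' G : ℝ → ℝ)
    (hderiv : ∀ x ∈ Icc a b, HasDerivAt F (F' x) x)
    (hderiv' : ∀ x ∈ Icc a b, HasDerivAt F' (F'' x) x)
    (hbound : (∀ x ∈ Icc a b, r ≤ F'' x) ∨ (∀ x ∈ Icc a b, F'' x ≤ -r))
    (hG : ∀ x ∈ Icc a b, |G x| ≤ M)
    (hmono : MonotoneOn (fun x => G x / F' x) (Icc a b) ∨
      AntitoneOn (fun x => G x / F' x) (Icc a b)) :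
    ‖∫ x in a..b, (G x : ℂ) * Complex.exp (Complex.I * (F x : ℂ))‖ ≤
      8 * M / Real.sqrt r := by
  obtain ⟨x₀, hx₀, hrF'⟩ : ∃ x₀ ∈ Icc a b, ∀ x ∈ Icc a b, r * |x - x₀| ≤ |F' x| := by
    rcases hbound with hpos | hneg
    · exact exists_mul_abs_sub_le_abs_of_le_deriv hab hderiv' hpos
    · simpa only [Pi.neg_apply, abs_neg] using exists_mul_abs_sub_le_abs_of_le_deriv hab
        (fun x hx => (hderiv' x hx).neg) fun x hx => le_neg_of_le_neg (hneg x hx)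
  calc _ ≤ 4 * M / (r * (2 / √r)) + 2 * (2 / √r) * M + 4 * M / (r * (2 / √r)) :=
        norm_integral_mul_exp_le_of_mul_abs_sub_le_abs_deriv hab hr (by positivity) hx₀ hderiv
          (HasDerivAt.continuousOn hderiv') hrF' hG hmono
    _ = 8 * M / √r := by
        field_simp
        rw [Real.sq_sqrt hr.le]
        ring
end
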